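/- arXiv:2502.18317 — 3 statements merged into one kernel-verified Lean document; each statement's English description precedes it below -/
import Mathlib

section
/- Let A ∈ ℂ^{n×n} be invertible and diagonalizable, A = ZΛZ^{-1} with Λ diagonal, and let Ax = b with ‖b‖ = 1. Let p be a polynomial, x̂ = p(A)b, r = b − A x̂. Write Z^{-1}b = (β̂₁,…,β̂ₙ)ᵀ and set βᵢ = β̂ᵢ/‖Z^{-1}‖. If all βᵢ ≠ 0, then ‖A^{-1} − p(A)‖/‖A^{-1}‖ ≤ κ(Z)·‖r‖/minᵢ|βᵢ|, where κ(Z) = ‖Z‖‖Z^{-1}‖. -/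
open scoped Matrix.Norms.L2Operator Matrix
open Polynomial

/-!
Write `q = 1 - X * p`, so that `r = q(A) b` and `A⁻¹ - p(A) = A⁻¹ q(A)`. Diagonalising,
`q(A) = Z q(Λ) Z⁻¹`, hence `‖A⁻¹ - p(A)‖ ≤ ‖A⁻¹‖ κ(Z) maxᵢ |q(λᵢ)|`. Conversely the residual sees
every eigenvalue: the `i`-th coordinate of `Z⁻¹ r = q(Λ) Z⁻¹ b` is `q(λᵢ) β̂ᵢ`, so
`|q(λᵢ)| |βᵢ| ≤ ‖Z⁻¹ r‖ / ‖Z⁻¹‖ ≤ ‖r‖`, i.e. `|q(λᵢ)| ≤ ‖r‖ / minⱼ |βⱼ|`.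
-/

theorem Polynomial.aeval_units_conj {R S : Type*} [CommSemiring R] [Semiring S] [Algebra R S]
    (u : Sˣ) (a : S) (p : R[X]) : aeval (↑u * a * ↑u⁻¹) p = ↑u * aeval a p * ↑u⁻¹ := by
  induction p using Polynomial.induction_on' with
  | add p q hp hq => simp only [map_add, hp, hq, mul_add, add_mul]
  | monomial k c =>
    rw [aeval_monomial, aeval_monomial, Units.conj_pow, ← mul_assoc, ← mul_assoc,
      Algebra.commutes]
    simp only [mul_assoc]

namespace Matrix

variable {m R 𝕜 : Type*} [Fintype m] [DecidableEq m]

theorem aeval_diagonal [CommSemiring R] (d : m → R) (q : R[X]) :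
    aeval (diagonal d) q = diagonal fun i => q.eval (d i) := by
  rw [← diagonalAlgHom_apply (R := R), aeval_algHom_apply, aeval_pi_apply]
  simp only [diagonalAlgHom_apply, coe_aeval_eq_eval]

theorem aeval_eq_conj_diagonal [CommRing R] {A Z : Matrix m m R} {Λ : m → R}
    (hZ : IsUnit Z.det) (hA : A = Z * diagonal Λ * Z⁻¹) (q : R[X]) :
    aeval A q = Z * diagonal (fun i => q.eval (Λ i)) * Z⁻¹ := by
  have h := aeval_units_conj (nonsingInvUnit Z hZ) (diagonal Λ) q
  rwa [coe_units_inv, show (nonsingInvUnit Z hZ : Matrix m m R) = Z from rfl, ← hA,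
    aeval_diagonal] at h

variable [RCLike 𝕜]

theorem l2_opNorm_diagonal_le {d : m → 𝕜} {C : ℝ} (hC : 0 ≤ C) (h : ∀ i, ‖d i‖ ≤ C) :
    ‖diagonal d‖ ≤ C := by
  rw [l2_opNorm_diagonal]
  exact (pi_norm_le_iff_of_nonneg hC).2 h

theorem l2_opNorm_mul_mul_le (Z D W : Matrix m m 𝕜) : ‖Z * D * W‖ ≤ ‖Z‖ * ‖W‖ * ‖D‖ :=
  calc ‖Z * D * W‖ ≤ ‖Z‖ * ‖D‖ * ‖W‖ :=
        (l2_opNorm_mul _ _).trans (by gcongr; exact l2_opNorm_mul _ _)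
    _ = ‖Z‖ * ‖W‖ * ‖D‖ := by ring

theorem l2_opNorm_aeval_le_of_eq_conj_diagonal {A Z : Matrix m m 𝕜} {Λ : m → 𝕜}
    (hZ : IsUnit Z.det) (hA : A = Z * diagonal Λ * Z⁻¹) (q : 𝕜[X]) {C : ℝ} (hC : 0 ≤ C)
    (hq : ∀ i, ‖q.eval (Λ i)‖ ≤ C) : ‖aeval A q‖ ≤ ‖Z‖ * ‖Z⁻¹‖ * C := by
  rw [aeval_eq_conj_diagonal hZ hA]
  exact (l2_opNorm_mul_mul_le _ _ _).trans (by gcongr; exact l2_opNorm_diagonal_le hC hq)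

theorem norm_eval_mul_norm_eigencomponent_le {A Z : Matrix m m 𝕜} {Λ : m → 𝕜}
    (hZ : IsUnit Z.det) (hA : A = Z * diagonal Λ * Z⁻¹) (q : 𝕜[X]) (b : EuclideanSpace 𝕜 m)
    (i : m) :
    ‖q.eval (Λ i)‖ * (‖(Z⁻¹ *ᵥ b) i‖ / ‖Z⁻¹‖) ≤ ‖WithLp.toLp 2 (aeval A q *ᵥ b)‖ := by
  have hcoord : (Z⁻¹ *ᵥ (aeval A q *ᵥ b)) i = q.eval (Λ i) * (Z⁻¹ *ᵥ b) i := by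
    rw [aeval_eq_conj_diagonal hZ hA, mulVec_mulVec, ← mul_assoc, ← mul_assoc,
      nonsing_inv_mul Z hZ, one_mul, ← mulVec_mulVec, mulVec_diagonal]
  rw [← mul_div_assoc, ← norm_mul, ← hcoord]
  refine div_le_of_le_mul₀ (norm_nonneg _) (norm_nonneg _) ?_
  calc ‖(Z⁻¹ *ᵥ (aeval A q *ᵥ b)) i‖
      ≤ ‖WithLp.toLp 2 (Z⁻¹ *ᵥ (aeval A q *ᵥ b))‖ :=
        PiLp.norm_apply_le (WithLp.toLp 2 (Z⁻¹ *ᵥ (aeval A q *ᵥ b))) i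
    _ ≤ ‖Z⁻¹‖ * ‖WithLp.toLp 2 (aeval A q *ᵥ b)‖ :=
        l2_opNorm_mulVec Z⁻¹ (WithLp.toLp 2 (aeval A q *ᵥ b))
    _ = _ := mul_comm _ _

end Matrix

theorem poly_inv_error_upper_bound_general (n : ℕ)
    (A Z : Matrix (Fin (n + 1)) (Fin (n + 1)) ℂ) (Λ : Fin (n + 1) → ℂ)
    (hA : IsUnit A.det) (hZ : IsUnit Z.det)
    (hdiag : A = Z * Matrix.diagonal Λ * Z⁻¹)
    (b : EuclideanSpace ℂ (Fin (n + 1)))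
    (p : Polynomial ℂ)
    (xh : EuclideanSpace ℂ (Fin (n + 1)))
    (hxh : xh = (WithLp.equiv 2 (Fin (n + 1) → ℂ)).symm ((Polynomial.aeval A p).mulVec b))
    (r : EuclideanSpace ℂ (Fin (n + 1)))
    (hr : r = b - (WithLp.equiv 2 (Fin (n + 1) → ℂ)).symm (A.mulVec xh))
    (β : Fin (n + 1) → ℂ)
    (hβ : ∀ i, β i = (Z⁻¹.mulVec b) i / ‖Z⁻¹‖)
    (hβ0 : ∀ i, β i ≠ 0) :
    ‖A⁻¹ - Polynomial.aeval A p‖ / ‖A⁻¹‖ ≤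
      (‖Z‖ * ‖Z⁻¹‖) * ‖r‖ /
        (Finset.univ.inf' Finset.univ_nonempty fun i => ‖β i‖) := by
  set q : ℂ[X] := 1 - X * p
  set βmin := Finset.univ.inf' Finset.univ_nonempty fun i => ‖β i‖
  have hβmin : 0 < βmin := (Finset.lt_inf'_iff _).2 fun i _ => norm_pos_iff.2 (hβ0 i)
  have hr_eq : r = WithLp.toLp 2 (aeval A q *ᵥ b) := by
    ext i
    simp [hr, hxh, q, Matrix.sub_mulVec, Matrix.mulVec_mulVec]
  have herr : A⁻¹ - aeval A p = A⁻¹ * aeval A q := by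
    simp [q, Matrix.mul_sub, ← Matrix.mul_assoc, Matrix.nonsing_inv_mul A hA]
  have hq : ∀ i, ‖q.eval (Λ i)‖ ≤ ‖r‖ / βmin := fun i => by
    have hβi : ‖β i‖ = ‖(Z⁻¹ *ᵥ b) i‖ / ‖Z⁻¹‖ := by
      rw [hβ, norm_div, Complex.norm_real, norm_norm]
    rw [le_div_iff₀ hβmin]
    calc ‖q.eval (Λ i)‖ * βmin ≤ ‖q.eval (Λ i)‖ * ‖β i‖ := by
          gcongr; exact Finset.inf'_le _ (Finset.mem_univ i)
      _ ≤ ‖r‖ := by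
          rw [hβi, hr_eq]
          exact Matrix.norm_eval_mul_norm_eigencomponent_le hZ hdiag q b i
  refine div_le_of_le_mul₀ (norm_nonneg _) (by positivity) ?_
  calc ‖A⁻¹ - aeval A p‖ ≤ ‖A⁻¹‖ * ‖aeval A q‖ := herr ▸ Matrix.l2_opNorm_mul _ _
    _ ≤ ‖A⁻¹‖ * (‖Z‖ * ‖Z⁻¹‖ * (‖r‖ / βmin)) := by
        gcongr
        exact Matrix.l2_opNorm_aeval_le_of_eq_conj_diagonal hZ hdiag q (by positivity) hq
    _ = ‖Z‖ * ‖Z⁻¹‖ * ‖r‖ / βmin * ‖A⁻¹‖ := by ring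

/-- Upper bound on the relative error of the polynomial approximation to the inverse
in terms of the residual norm, the eigenvector condition number, and the smallest
eigencomponent of the right-hand side. -/
theorem poly_inv_error_upper_bound (n : ℕ)
    (A Z : Matrix (Fin (n + 1)) (Fin (n + 1)) ℂ) (Λ : Fin (n + 1) → ℂ)
    (hA : IsUnit A.det) (hZ : IsUnit Z.det)
    (hdiag : A = Z * Matrix.diagonal Λ * Z⁻¹)
    (b : EuclideanSpace ℂ (Fin (n + 1))) (hb : ‖b‖ = 1)
    (x : EuclideanSpace ℂ (Fin (n + 1)))
    (hx : (WithLp.equiv 2 (Fin (n + 1) → ℂ)).symm (A.mulVec x) = b)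
    (p : Polynomial ℂ)
    (xh : EuclideanSpace ℂ (Fin (n + 1)))
    (hxh : xh = (WithLp.equiv 2 (Fin (n + 1) → ℂ)).symm ((Polynomial.aeval A p).mulVec b))
    (r : EuclideanSpace ℂ (Fin (n + 1)))
    (hr : r = b - (WithLp.equiv 2 (Fin (n + 1) → ℂ)).symm (A.mulVec xh))
    (β : Fin (n + 1) → ℂ)
    (hβ : ∀ i, β i = (Z⁻¹.mulVec b) i / ‖Z⁻¹‖)
    (hβ0 : ∀ i, β i ≠ 0) :
    ‖A⁻¹ - Polynomial.aeval A p‖ / ‖A⁻¹‖ ≤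
      (‖Z‖ * ‖Z⁻¹‖) * ‖r‖ /
        (Finset.univ.inf' Finset.univ_nonempty fun i => ‖β i‖) :=
  poly_inv_error_upper_bound_general n A Z Λ hA hZ hdiag b p xh hxh r hr β hβ hβ0
end

section
/- Let A ∈ ℂ^{n×n} be Hermitian invertible and indefinite, with negative eigenvalues λ_{−m} ≤ ⋯ ≤ λ_{−1} < 0 and positive eigenvalues 0 < λ₁ ≤ ⋯ ≤ λ_p. Then every harmonic Ritz value θ of A (with respect to any subspace) satisfies θ ≤ λ_{−1} or θ ≥ λ₁; i.e., no harmonic Ritz value lies in the open interval (λ_{−1}, λ₁) containing the origin. -/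
/-!
In an orthonormal eigenbasis of `A`, the Rayleigh quotient of `A⁻¹` at `v` is the average of the
`1 / λᵢ` weighted by the squared moduli of the coordinates of `v`. Hence `1 / θ` lies in the
convex hull of the `1 / λᵢ`, which the spectral gap confines to `[1 / λ₋₁, 1 / λ₁]`; and inversion
maps `[1 / λ₋₁, 1 / λ₁] \ {0}` back onto the complement of `(λ₋₁, λ₁)`.
-/

open scoped Matrix ComplexOrder
open Matrix Finset

theorem inv_mem_Icc_inv_iff {a b x : ℝ} (ha : a < 0) (hb : 0 < b) (hx : x ≠ 0) :
    x⁻¹ ∈ Set.Icc a⁻¹ b⁻¹ ↔ x ≤ a ∨ b ≤ x := by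
  rcases hx.lt_or_gt with hx | hx
  · have hxb : x⁻¹ ≤ b⁻¹ := (inv_lt_zero.2 hx).le.trans (inv_pos.2 hb).le
    simp [inv_le_inv_of_neg ha hx, hxb, not_le.2 (hx.trans hb)]
  · have hax : a⁻¹ ≤ x⁻¹ := (inv_lt_zero.2 ha).le.trans (inv_pos.2 hx).le
    simp [inv_le_inv₀ hx hb, hax, not_le.2 (ha.trans hx)]

namespace Matrix

variable {𝕜 n : Type*} [RCLike 𝕜] [Fintype n]

theorem star_dotProduct_mul_mul_star_mulVec (U D : Matrix n n 𝕜) (v : n → 𝕜) :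
    star v ⬝ᵥ (U * D * star U) *ᵥ v = star (star U *ᵥ v) ⬝ᵥ D *ᵥ (star U *ᵥ v) := by
  rw [← mulVec_mulVec, ← mulVec_mulVec, dotProduct_mulVec, star_mulVec, star_eq_conjTranspose,
    conjTranspose_conjTranspose]

variable [DecidableEq n]

theorem star_dotProduct_diagonal_mulVec (d : n → ℝ) (w : n → 𝕜) :
    star w ⬝ᵥ diagonal (RCLike.ofReal ∘ d) *ᵥ w = ((∑ i, d i * ‖w i‖ ^ 2 : ℝ) : 𝕜) := by
  simp only [dotProduct, mulVec_diagonal, Pi.star_apply, Function.comp_apply, RCLike.ofReal_sum,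
    RCLike.ofReal_mul, RCLike.ofReal_pow, RCLike.star_def]
  refine sum_congr rfl fun i _ => ?_
  rw [mul_left_comm, RCLike.conj_mul]

namespace IsHermitian

variable {A : Matrix n n 𝕜} (hA : A.IsHermitian)

theorem star_dotProduct_cfc_mulVec (f : ℝ → ℝ) (v : n → 𝕜) :
    star v ⬝ᵥ cfc f A *ᵥ v = ((∑ i, f (hA.eigenvalues i) *
      ‖(star (hA.eigenvectorUnitary : Matrix n n 𝕜) *ᵥ v) i‖ ^ 2 : ℝ) : 𝕜) := by
  rw [hA.cfc_eq, IsHermitian.cfc, Unitary.conjStarAlgAut_apply,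
    star_dotProduct_mul_mul_star_mulVec, star_dotProduct_diagonal_mulVec]
  rfl

theorem exists_mem_eq_rayleigh_cfc {s : Set ℝ} (hs : Convex ℝ s) {f : ℝ → ℝ}
    (hf : ∀ i, f (hA.eigenvalues i) ∈ s) {v : n → 𝕜} (hv : v ≠ 0) :
    ∃ r ∈ s, star v ⬝ᵥ cfc f A *ᵥ v / (star v ⬝ᵥ v) = r := by
  set w := star (hA.eigenvectorUnitary : Matrix n n 𝕜) *ᵥ v
  have hself : star v ⬝ᵥ v = ((∑ i, ‖w i‖ ^ 2 : ℝ) : 𝕜) := by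
    simpa [cfc_const_one ℝ A] using hA.star_dotProduct_cfc_mulVec (fun _ => 1) v
  have hpos : 0 < ∑ i, ‖w i‖ ^ 2 := by
    refine lt_of_le_of_ne (sum_nonneg fun i _ => sq_nonneg _) fun h => hv ?_
    rwa [← h, RCLike.ofReal_zero, dotProduct_star_self_eq_zero] at hself
  refine ⟨univ.centerMass (fun i => ‖w i‖ ^ 2) (f ∘ hA.eigenvalues),
    hs.centerMass_mem (fun i _ => sq_nonneg _) hpos fun i _ => hf i, ?_⟩
  rw [hA.star_dotProduct_cfc_mulVec, hself, ← RCLike.ofReal_div, centerMass, smul_eq_mul,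
    inv_mul_eq_div]
  simp only [smul_eq_mul, Function.comp_apply, mul_comm, w]

end IsHermitian

end Matrix

theorem harmonic_ritz_gap_general (n : ℕ)
    (A : Matrix (Fin n) (Fin n) ℂ) (hA : A.IsHermitian) (hdet : IsUnit A.det)
    (lamNeg lamPos : ℝ) (hneg : lamNeg < 0) (hpos : 0 < lamPos)
    (hgap : ∀ i, hA.eigenvalues i ≤ lamNeg ∨ lamPos ≤ hA.eigenvalues i)
    (θ : ℝ) (hθ : θ ≠ 0)
    (v : Fin n → ℂ) (hv : v ≠ 0)
    -- `θ` is a harmonic Ritz value: `1/θ` is a Rayleigh quotient of `A⁻¹`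
    (hW : ((θ : ℂ))⁻¹ = (star v ⬝ᵥ A⁻¹.mulVec v) / (star v ⬝ᵥ v)) :
    θ ≤ lamNeg ∨ lamPos ≤ θ := by
  have hinv : A⁻¹ = cfc (fun x : ℝ => x⁻¹) A := by
    rw [nonsing_inv_eq_ringInverse]
    exact (cfc_ringInverse_id A ((isUnit_iff_isUnit_det A).2 hdet) hA).symm
  have heig_ne (i : Fin n) : hA.eigenvalues i ≠ 0 :=
    (hgap i).elim (fun h => (h.trans_lt hneg).ne) fun h => (hpos.trans_le h).ne'
  obtain ⟨r, hr, hAr⟩ := hA.exists_mem_eq_rayleigh_cfc (convex_Icc lamNeg⁻¹ lamPos⁻¹)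
    (fun i => (inv_mem_Icc_inv_iff hneg hpos (heig_ne i)).2 (hgap i)) hv
  have hθr : θ⁻¹ = r := by
    rw [← hinv, ← hW, ← Complex.ofReal_inv] at hAr
    exact RCLike.ofReal_injective hAr
  exact (inv_mem_Icc_inv_iff hneg hpos hθ).1 (hθr ▸ hr)

/-- For a Hermitian invertible indefinite matrix with largest negative eigenvalue
`λ₋₁` and smallest positive eigenvalue `λ₁`, no harmonic Ritz value lies in the
open interval `(λ₋₁, λ₁)` containing the origin. -/
theorem harmonic_ritz_gap (n : ℕ)
    (A : Matrix (Fin n) (Fin n) ℂ) (hA : A.IsHermitian) (hdet : IsUnit A.det)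
    (lamNeg lamPos : ℝ) (hneg : lamNeg < 0) (hpos : 0 < lamPos)
    (hneg_mem : ∃ i, hA.eigenvalues i = lamNeg)
    (hpos_mem : ∃ i, hA.eigenvalues i = lamPos)
    (hgap : ∀ i, hA.eigenvalues i ≤ lamNeg ∨ lamPos ≤ hA.eigenvalues i)
    (θ : ℝ) (hθ : θ ≠ 0)
    (v : Fin n → ℂ) (hv : v ≠ 0)
    -- `θ` is a harmonic Ritz value: `1/θ` is a Rayleigh quotient of `A⁻¹`
    (hW : ((θ : ℂ))⁻¹ = (star v ⬝ᵥ A⁻¹.mulVec v) / (star v ⬝ᵥ v)) :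
    θ ≤ lamNeg ∨ lamPos ≤ θ :=
  harmonic_ritz_gap_general n A hA hdet lamNeg lamPos hneg hpos hgap θ hθ v hv hW
end

section
/- Let A ∈ ℂ^{n×n} be diagonalizable, A = ZΛZ^{-1}, with eigenvalues λ₁,…,λₙ. Let b⁽¹⁾ and b⁽²⁾ be unit vectors with eigenvector expansions b⁽¹⁾ = Σ βᵢ⁽¹⁾ zᵢ and b⁽²⁾ = Σ βᵢ⁽²⁾ zᵢ where zᵢ are the columns of Z, and assume all βᵢ⁽¹⁾ ≠ 0. Let p be any polynomial, π(z) = 1 − z p(z), and define residuals r⁽¹⁾ = b⁽¹⁾ − A p(A) b⁽¹⁾ and r⁽²⁾ = b⁽²⁾ − A p(A) b⁽²⁾. Then ‖r⁽²⁾‖ ≤ ‖Z‖‖Z^{-1}‖ · (maxᵢ |βᵢ⁽²⁾/βᵢ⁽¹⁾|) · ‖r⁽¹⁾‖. -/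
/-!
The matrix `B = Z diag(β⁽²⁾ / β⁽¹⁾) Z⁻¹` maps `b⁽¹⁾` to `b⁽²⁾` and, being diagonal in the
eigenbasis of `A`, commutes with `A` and hence with `π(A)`. Therefore
`r⁽²⁾ = π(A) B b⁽¹⁾ = B r⁽¹⁾`, and `‖B‖ ≤ ‖Z‖ ‖Z⁻¹‖ maxᵢ |βᵢ⁽²⁾ / βᵢ⁽¹⁾|`.
-/

open scoped Matrix.Norms.L2Operator Matrix

theorem Commute.conj_of_mul_eq_one {M : Type*} [Monoid M] {a b z w : M} (hwz : w * z = 1)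
    (h : Commute a b) : Commute (z * a * w) (z * b * w) := by
  have hconj : ∀ x y : M, z * x * w * (z * y * w) = z * (x * y) * w := fun x y => by
    simp only [mul_assoc]
    rw [← mul_assoc w z, hwz, one_mul]
  rw [Commute, SemiconjBy, hconj, hconj, h.eq]

namespace Matrix

section CommRing

variable {ι R : Type*} [Fintype ι] [CommRing R]

theorem mulVec_sub_mulVec_mulVec_of_commute {A B Q : Matrix ι ι R} (hA : Commute B A)
    (hQ : Commute B Q) (b : ι → R) :
    B *ᵥ (b - A *ᵥ Q *ᵥ b) = B *ᵥ b - A *ᵥ Q *ᵥ B *ᵥ b := by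
  rw [mulVec_sub, mulVec_mulVec, mulVec_mulVec, mulVec_mulVec, mulVec_mulVec,
    hA.eq, mul_assoc, hQ.eq, ← mul_assoc]

theorem conj_diagonal_mulVec_eq [DecidableEq ι] {Z : Matrix ι ι R} (hZ : Z * Z⁻¹ = 1)
    {c x y : ι → R} (h : ∀ i, c i * (Z⁻¹ *ᵥ x) i = (Z⁻¹ *ᵥ y) i) :
    (Z * diagonal c * Z⁻¹) *ᵥ x = y := by
  have hD : diagonal c *ᵥ (Z⁻¹ *ᵥ x) = Z⁻¹ *ᵥ y := funext fun i => by
    rw [mulVec_diagonal, h]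
  rw [← mulVec_mulVec, ← mulVec_mulVec, hD, mulVec_mulVec, hZ, one_mulVec]

end CommRing

theorem l2_opNorm_mul_diagonal_mul_le {ι 𝕜 : Type*} [Fintype ι] [DecidableEq ι] [RCLike 𝕜]
    {Z W : Matrix ι ι 𝕜} {c : ι → 𝕜} {C : ℝ} (hc : ∀ i, ‖c i‖ ≤ C) (hC : 0 ≤ C) :
    ‖Z * diagonal c * W‖ ≤ ‖Z‖ * ‖W‖ * C := by
  have hD : ‖(diagonal c : Matrix ι ι 𝕜)‖ ≤ C := by
    rw [l2_opNorm_diagonal]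
    exact (pi_norm_le_iff_of_nonneg hC).2 hc
  calc ‖Z * diagonal c * W‖ ≤ ‖Z‖ * ‖(diagonal c : Matrix ι ι 𝕜)‖ * ‖W‖ := by
        grw [l2_opNorm_mul, l2_opNorm_mul]
    _ ≤ ‖Z‖ * C * ‖W‖ := by gcongr
    _ = ‖Z‖ * ‖W‖ * C := mul_right_comm _ _ _

end Matrix

theorem second_rhs_residual_bound_general (n : ℕ)
    (A Z : Matrix (Fin (n + 1)) (Fin (n + 1)) ℂ) (Λ : Fin (n + 1) → ℂ)
    (hZ : IsUnit Z.det) (hdiag : A = Z * Matrix.diagonal Λ * Z⁻¹)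
    (b1 b2 : EuclideanSpace ℂ (Fin (n + 1)))
    (β1 β2 : Fin (n + 1) → ℂ)
    (hβ1 : ∀ i, β1 i = Z⁻¹.mulVec b1 i) (hβ2 : ∀ i, β2 i = Z⁻¹.mulVec b2 i)
    (hβ1ne : ∀ i, β1 i ≠ 0)
    (p : Polynomial ℂ)
    (r1 r2 : EuclideanSpace ℂ (Fin (n + 1)))
    (hr1 : r1 = b1 - (WithLp.equiv 2 (Fin (n + 1) → ℂ)).symm
      (A.mulVec ((Polynomial.aeval A p).mulVec b1)))
    (hr2 : r2 = b2 - (WithLp.equiv 2 (Fin (n + 1) → ℂ)).symm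
      (A.mulVec ((Polynomial.aeval A p).mulVec b2))) :
    ‖r2‖ ≤ (‖Z‖ * ‖Z⁻¹‖) *
      (Finset.univ.sup' Finset.univ_nonempty fun i => ‖β2 i / β1 i‖) *
      ‖r1‖ := by
  set B := Z * Matrix.diagonal (fun i => β2 i / β1 i) * Z⁻¹
  have hBb : B *ᵥ b1 = b2 := Matrix.conj_diagonal_mulVec_eq (Z.mul_nonsing_inv hZ) fun i => by
    rw [← hβ1, ← hβ2, div_mul_cancel₀ _ (hβ1ne i)]
  have hBA : Commute B A :=
    hdiag ▸ (Matrix.commute_diagonal _ _).conj_of_mul_eq_one (Z.nonsing_inv_mul hZ)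
  have hBq : Commute B (Polynomial.aeval A p) :=
    Algebra.commute_of_mem_adjoin_singleton_of_commute (p.aeval_mem_adjoin_singleton ℂ A) hBA
  have hr : r2.ofLp = B *ᵥ r1.ofLp := by
    simp only [hr1, hr2, WithLp.equiv_symm_apply, WithLp.ofLp_sub]
    rw [Matrix.mulVec_sub_mulVec_mulVec_of_commute hBA hBq, hBb]
  have hratio : ∀ i, ‖β2 i / β1 i‖ ≤
      Finset.univ.sup' Finset.univ_nonempty fun i => ‖β2 i / β1 i‖ :=
    fun i => Finset.le_sup' (fun i => ‖β2 i / β1 i‖) (Finset.mem_univ i)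
  calc ‖r2‖ ≤ ‖B‖ * ‖r1‖ := by simpa [← hr] using Matrix.l2_opNorm_mulVec B r1
    _ ≤ _ := by
      gcongr
      exact Matrix.l2_opNorm_mul_diagonal_mul_le hratio ((norm_nonneg _).trans (hratio 0))

/-- Residual bound for a second right-hand side when reusing the polynomial `p`
built from the first right-hand side:
`‖r⁽²⁾‖ ≤ ‖Z‖‖Z⁻¹‖ · max_i |β_i⁽²⁾/β_i⁽¹⁾| · ‖r⁽¹⁾‖`. -/
theorem second_rhs_residual_bound (n : ℕ)
    (A Z : Matrix (Fin (n + 1)) (Fin (n + 1)) ℂ) (Λ : Fin (n + 1) → ℂ)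
    (hZ : IsUnit Z.det) (hdiag : A = Z * Matrix.diagonal Λ * Z⁻¹)
    (b1 b2 : EuclideanSpace ℂ (Fin (n + 1))) (hb1 : ‖b1‖ = 1) (hb2 : ‖b2‖ = 1)
    (β1 β2 : Fin (n + 1) → ℂ)
    (hβ1 : ∀ i, β1 i = Z⁻¹.mulVec b1 i) (hβ2 : ∀ i, β2 i = Z⁻¹.mulVec b2 i)
    (hβ1ne : ∀ i, β1 i ≠ 0)
    (p : Polynomial ℂ)
    (r1 r2 : EuclideanSpace ℂ (Fin (n + 1)))
    (hr1 : r1 = b1 - (WithLp.equiv 2 (Fin (n + 1) → ℂ)).symm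
      (A.mulVec ((Polynomial.aeval A p).mulVec b1)))
    (hr2 : r2 = b2 - (WithLp.equiv 2 (Fin (n + 1) → ℂ)).symm
      (A.mulVec ((Polynomial.aeval A p).mulVec b2))) :
    ‖r2‖ ≤ (‖Z‖ * ‖Z⁻¹‖) *
      (Finset.univ.sup' Finset.univ_nonempty fun i => ‖β2 i / β1 i‖) *
      ‖r1‖ :=
  second_rhs_residual_bound_general n A Z Λ hZ hdiag b1 b2 β1 β2 hβ1 hβ2 hβ1ne p r1 r2 hr1 hr2
end
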